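/- arXiv:1703.06183 — 2 statements merged into one kernel-verified Lean document; each statement's English description precedes it below -/
import Mathlib

section
/- Let ψ ∈ H be a unit vector and 𝒩 = {𝒩_1,…,𝒩_K} a neighborhood structure. If the smallest real Lie subalgebra of the skew-Hermitian D×D matrices containing every u_{𝒩_k,ψ}, k = 1,…,K, equals u_ψ, then span(ψ) = ⋂_{k=1}^K Σ̄_{𝒩_k}(ψ). -/
open scoped BigOperators Matrix ComplexOrder

namespace QLS

variable {N : ℕ}

/-- Index type of the full multipartite Hilbert space `⊗ᵢ ℂ^{d i}`. -/
abbrev Idx (d : Fin N → ℕ) : Type := ∀ i, Fin (d i)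

/-- Index type of the Hilbert space `⊗_{i ∈ S} ℂ^{d i}` of a subset `S` of subsystems. -/
abbrev SIdx (d : Fin N → ℕ) (S : Finset (Fin N)) : Type := ∀ i : S, Fin (d i)

/-- Merge an index on `S` and an index on `Sᶜ` into a global index. -/
def merge (d : Fin N → ℕ) (S : Finset (Fin N)) (u : SIdx d S) (w : SIdx d Sᶜ) : Idx d :=
  fun i => if h : i ∈ S then u ⟨i, h⟩ else w ⟨i, Finset.mem_compl.mpr h⟩

/-- Partial trace over the complement of `S`: `Tr_{Sᶜ}`. -/
noncomputable def ptrace (d : Fin N → ℕ) (S : Finset (Fin N))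
    (M : Matrix (Idx d) (Idx d) ℂ) : Matrix (SIdx d S) (SIdx d S) ℂ :=
  fun u v => ∑ w : SIdx d Sᶜ, M (merge d S u w) (merge d S v w)

/-- `X` acts only on the subsystems in `S`, i.e. `X = Y ⊗ I_{Sᶜ}`. -/
def ActsOn (d : Fin N → ℕ) (S : Finset (Fin N)) (X : Matrix (Idx d) (Idx d) ℂ) : Prop :=
  ∃ Y : Matrix (SIdx d S) (SIdx d S) ℂ, ∀ (u u' : SIdx d S) (w w' : SIdx d Sᶜ),
    X (merge d S u w) (merge d S u' w') = if w = w' then Y u u' else 0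

/-- The rank-one projector `|ψ⟩⟨ψ|`. -/
noncomputable def proj (d : Fin N → ℕ) (ψ : Idx d → ℂ) : Matrix (Idx d) (Idx d) ℂ :=
  fun a b => ψ a * (starRingEnd ℂ) (ψ b)

/-- `ψ` is a unit vector. -/
def IsUnitVec (d : Fin N → ℕ) (ψ : Idx d → ℂ) : Prop :=
  ∑ a, Complex.normSq (ψ a) = 1

/-- Superoperators on the multipartite space. -/
abbrev Sop (d : Fin N → ℕ) : Type :=
  Matrix (Idx d) (Idx d) ℂ →ₗ[ℂ] Matrix (Idx d) (Idx d) ℂ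

/-- `E` is completely positive and trace preserving (Kraus form). -/
def IsCPTP (d : Fin N → ℕ) (E : Sop d) : Prop :=
  ∃ (m : ℕ) (K : Fin m → Matrix (Idx d) (Idx d) ℂ),
    (∀ ρ, E ρ = ∑ i, K i * ρ * (K i)ᴴ) ∧ (∑ i, (K i)ᴴ * K i = 1)

/-- `E` is a CPTP map whose Kraus operators all act only on `S`. -/
def IsNeighborhoodMap (d : Fin N → ℕ) (S : Finset (Fin N)) (E : Sop d) : Prop :=
  ∃ (m : ℕ) (K : Fin m → Matrix (Idx d) (Idx d) ℂ),
    (∀ i, ActsOn d S (K i)) ∧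
    (∀ ρ, E ρ = ∑ i, K i * ρ * (K i)ᴴ) ∧ (∑ i, (K i)ᴴ * K i = 1)

/-- A density matrix. -/
def IsDensity (d : Fin N → ℕ) (ρ : Matrix (Idx d) (Idx d) ℂ) : Prop :=
  ρ.PosSemidef ∧ ρ.trace = 1

/-- Sequential composition `E_{T-1} ∘ ⋯ ∘ E_1 ∘ E_0` (index `0` applied first). -/
def seqComp {V : Type*} [AddCommMonoid V] [Module ℂ V] :
    ∀ {T : ℕ}, (Fin T → (V →ₗ[ℂ] V)) → (V →ₗ[ℂ] V)
  | 0, _ => LinearMap.id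
  | T + 1, E => E (Fin.last T) ∘ₗ seqComp fun t => E t.castSucc

/-- Finite-time stabilizability of `ψ` w.r.t. the neighborhood structure `𝒩`. -/
def FTS (d : Fin N → ℕ) {K : ℕ} (𝒩 : Fin K → Finset (Fin N)) (ψ : Idx d → ℂ) : Prop :=
  ∃ (T : ℕ) (E : Fin T → Sop d),
    (∀ t, ∃ k, IsNeighborhoodMap d (𝒩 k) (E t)) ∧
    (∀ t, E t (proj d ψ) = proj d ψ) ∧
    (∀ σ, IsDensity d σ → seqComp E σ = proj d ψ)

/-- Robust finite-time stabilizability: any ordering of the maps prepares `ψ`. -/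
def RFTS (d : Fin N → ℕ) {K : ℕ} (𝒩 : Fin K → Finset (Fin N)) (ψ : Idx d → ℂ) : Prop :=
  ∃ (T : ℕ) (E : Fin T → Sop d),
    (∀ t, ∃ k, IsNeighborhoodMap d (𝒩 k) (E t)) ∧
    (∀ t, E t (proj d ψ) = proj d ψ) ∧
    (∀ π : Equiv.Perm (Fin T), ∀ σ, IsDensity d σ → seqComp (fun t => E (π t)) σ = proj d ψ)

/-- The Schmidt span of `ψ` on `S`: the range of the reduced state `Tr_{Sᶜ}|ψ⟩⟨ψ|`. -/
noncomputable def schmidtSpan (d : Fin N → ℕ) (S : Finset (Fin N)) (ψ : Idx d → ℂ) :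
    Submodule ℂ (SIdx d S → ℂ) :=
  LinearMap.range (Matrix.mulVecLin (ptrace d S (proj d ψ)))

/-- Slicing a global vector along a fixed index of `Sᶜ` (linear in the vector). -/
def sliceMap (d : Fin N → ℕ) (S : Finset (Fin N)) (w : SIdx d Sᶜ) :
    (Idx d → ℂ) →ₗ[ℂ] (SIdx d S → ℂ) where
  toFun v := fun u => v (merge d S u w)
  map_add' _ _ := rfl
  map_smul' _ _ := rfl

/-- The extended Schmidt span `Σ̄_S(ψ) = Σ_S(ψ) ⊗ H_{Sᶜ}`, described as the set of vectors
all of whose slices along `Sᶜ` lie in the Schmidt span. -/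
noncomputable def extSchmidtSpan (d : Fin N → ℕ) (S : Finset (Fin N)) (ψ : Idx d → ℂ) :
    Submodule ℂ (Idx d → ℂ) :=
  ⨅ w : SIdx d Sᶜ, (schmidtSpan d S ψ).comap (sliceMap d S w)

/-- `P` is the orthogonal projection matrix onto the subspace `V` (Hermitian idempotent
with range `V`). -/
def IsOrthProjOnto {ι : Type*} [Fintype ι] [DecidableEq ι]
    (P : Matrix ι ι ℂ) (V : Submodule ℂ (ι → ℂ)) : Prop :=
  Pᴴ = P ∧ P * P = P ∧ LinearMap.range P.mulVecLin = V

/-- The neighborhood expansion `A^𝒩` of a set of subsystems. -/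
def expand {K : ℕ} (𝒩 : Fin K → Finset (Fin N)) (A : Finset (Fin N)) : Finset (Fin N) :=
  Finset.univ.biUnion fun k => if (𝒩 k ∩ A).Nonempty then 𝒩 k else ∅

/-- Standard sesquilinear dot product. -/
noncomputable def dotc {ι : Type*} [Fintype ι] (u v : ι → ℂ) : ℂ :=
  ∑ a, (starRingEnd ℂ) (u a) * v a

/-- Slicing a global vector along a single site `i`, other coordinates fixed by `a`. -/
def sliceAt (d : Fin N → ℕ) (i : Fin N) (a : Idx d) :
    (Idx d → ℂ) →ₗ[ℂ] (Fin (d i) → ℂ) where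
  toFun v := fun x => v (Function.update a i x)
  map_add' _ _ := rfl
  map_smul' _ _ := rfl

/-- The tensor product `⊗ᵢ tᵢ` of local subspaces, as a subspace of the global space:
the set of vectors all of whose single-site slices lie in the local subspaces. -/
noncomputable def tensorSub (d : Fin N → ℕ) (t : ∀ i, Submodule ℂ (Fin (d i) → ℂ)) :
    Submodule ℂ (Idx d → ℂ) :=
  ⨅ i, ⨅ a : Idx d, (t i).comap (sliceAt d i a)

open Classical in
/-- The operator `X` on the `j`-th factor, amplified by the identity on all other factors. -/
noncomputable def factorMat {M : ℕ} (m : Fin M → ℕ) (j : Fin M)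
    (X : Matrix (Fin (m j)) (Fin (m j)) ℂ) :
    Matrix (∀ l, Fin (m l)) (∀ l, Fin (m l)) ℂ :=
  fun a b => if (∀ l, l ≠ j → a l = b l) then X (a j) (b j) else 0

/-- Partial trace onto a single site `i`. -/
noncomputable def ptrace1 (d : Fin N → ℕ) (i : Fin N) (M : Matrix (Idx d) (Idx d) ℂ) :
    Matrix (Fin (d i)) (Fin (d i)) ℂ :=
  fun x y => ∑ a : Idx d, if a i = x then M a (Function.update a i y) else 0

/-- Local support `H̃ᵢ`: the range of the single-site reduced state of `ψ`. -/
noncomputable def localSupp (d : Fin N → ℕ) (ψ : Idx d → ℂ) (i : Fin N) :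
    Submodule ℂ (Fin (d i) → ℂ) :=
  LinearMap.range (Matrix.mulVecLin (ptrace1 d i (proj d ψ)))

/-- Set of skew-Hermitian matrices commuting with `|ψ⟩⟨ψ|` (the Lie algebra `u_ψ`). -/
noncomputable def stabSet (d : Fin N → ℕ) (ψ : Idx d → ℂ) :
    Set (Matrix (Idx d) (Idx d) ℂ) :=
  {X | Xᴴ = -X ∧ X * proj d ψ = proj d ψ * X}

/-- The Lie algebra `u_{𝒩ₖ,ψ}` of skew-Hermitian stabilizers acting only on `S`. -/
noncomputable def nstabSet (d : Fin N → ℕ) (S : Finset (Fin N)) (ψ : Idx d → ℂ) :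
    Set (Matrix (Idx d) (Idx d) ℂ) :=
  {X | (Xᴴ = -X ∧ X * proj d ψ = proj d ψ * X) ∧ ActsOn d S X}

attribute [local instance 100] LieRing.ofAssociativeRing

/-- The unitary generation property: the real Lie algebra generated by the
neighborhood stabilizer algebras is the full stabilizer algebra `u_ψ`. -/
noncomputable def UnitaryGenProp (d : Fin N → ℕ) {K : ℕ} (𝒩 : Fin K → Finset (Fin N))
    (ψ : Idx d → ℂ) : Prop :=
  ((LieSubalgebra.lieSpan ℝ (Matrix (Idx d) (Idx d) ℂ)
      (⋃ k, nstabSet d (𝒩 k) ψ)) : Set (Matrix (Idx d) (Idx d) ℂ)) = stabSet d ψ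

/-- The unitary stabilizer group `U_ψ` (as a set of matrices). -/
noncomputable def uStab (d : Fin N → ℕ) (ψ : Idx d → ℂ) : Set (Matrix (Idx d) (Idx d) ℂ) :=
  {U | U ∈ Matrix.unitaryGroup (Idx d) ℂ ∧ U * proj d ψ * Uᴴ = proj d ψ}

/-- The neighborhood unitary stabilizer group `U_{𝒩ₖ,ψ}` (as a set of matrices). -/
noncomputable def uNStab (d : Fin N → ℕ) (S : Finset (Fin N)) (ψ : Idx d → ℂ) :
    Set (Matrix (Idx d) (Idx d) ℂ) :=
  {U | (U ∈ Matrix.unitaryGroup (Idx d) ℂ ∧ U * proj d ψ * Uᴴ = proj d ψ) ∧ ActsOn d S U}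

/-- `x log x` with the convention `0 log 0 = 0`. -/
noncomputable def entAux (x : ℝ) : ℝ := if x = 0 then 0 else x * Real.log x

open Classical in
/-- Von Neumann entropy of a (Hermitian) matrix. -/
noncomputable def vnEntropy {n : Type*} [Fintype n] [DecidableEq n]
    (σ : Matrix n n ℂ) : ℝ :=
  if h : σ.IsHermitian then -∑ i, entAux (h.eigenvalues i) else 0

/-! An operator `X = Y ⊗ I` acting only on `S` that commutes with `|ψ⟩⟨ψ|` has
`ψ` as an eigenvector, say `Xψ = cψ`; then `Y` has eigenvalue `c` on every slice of `ψ`, hence on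
the Schmidt span they span, hence `X` acts as the scalar `c` on the extended Schmidt span.
Operators acting by a scalar on `W = ⋂ₖ Σ̄_{𝒩ₖ}(ψ)` form a real Lie subalgebra, so by unitary
generation every element of `u_ψ` acts by a scalar on `W`. Applied to `i|ψ⟩⟨ψ| ∈ u_ψ`, this makes
`|ψ⟩⟨ψ|` the identity on `W ∋ ψ`, i.e. `W = span ψ`. -/

section ScalarOn

variable {ι R A : Type*} [Fintype ι] [DecidableEq ι] [CommRing R] [CommRing A] [Algebra R A]

def scalarOn (W : Submodule A (ι → A)) : LieSubalgebra R (Matrix ι ι A) where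
  carrier := {X | ∃ c : A, ∀ v ∈ W, X *ᵥ v = c • v}
  add_mem' := by
    rintro X X' ⟨c, hc⟩ ⟨c', hc'⟩
    exact ⟨c + c', fun v hv => by rw [Matrix.add_mulVec, hc v hv, hc' v hv, add_smul]⟩
  zero_mem' := ⟨0, fun v _ => by rw [Matrix.zero_mulVec, zero_smul]⟩
  smul_mem' := by
    rintro r X ⟨c, hc⟩
    exact ⟨r • c, fun v hv => by rw [Matrix.smul_mulVec, hc v hv, smul_assoc]⟩
  lie_mem' := by
    rintro X X' ⟨c, hc⟩ ⟨c', hc'⟩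
    refine ⟨0, fun v hv => ?_⟩
    rw [Ring.lie_def, Matrix.sub_mulVec, ← Matrix.mulVec_mulVec, ← Matrix.mulVec_mulVec,
      hc' v hv, Matrix.mulVec_smul, hc v hv, Matrix.mulVec_smul, hc' v hv, smul_smul,
      smul_smul, mul_comm, sub_self, zero_smul]

end ScalarOn

section Projector

variable {N : ℕ} {d : Fin N → ℕ} {ψ : Idx d → ℂ}

lemma proj_mulVec (ψ v : Idx d → ℂ) : proj d ψ *ᵥ v = dotc ψ v • ψ := by
  funext a
  simp only [Matrix.mulVec, dotProduct, proj, dotc, Pi.smul_apply, smul_eq_mul, Finset.sum_mul]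
  exact Finset.sum_congr rfl fun b _ => by ring

lemma IsUnitVec.dotc_self (hunit : IsUnitVec d ψ) : dotc ψ ψ = 1 := by
  simp only [dotc, ← Complex.normSq_eq_conj_mul_self]
  exact_mod_cast hunit

lemma IsUnitVec.ne_zero (hunit : IsUnitVec d ψ) : ψ ≠ 0 := by
  rintro rfl
  simp [IsUnitVec] at hunit

lemma IsUnitVec.proj_mulVec_self (hunit : IsUnitVec d ψ) : proj d ψ *ᵥ ψ = ψ := by
  rw [proj_mulVec, hunit.dotc_self, one_smul]

lemma IsUnitVec.mulVec_self_eq_smul_of_commute (hunit : IsUnitVec d ψ)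
    {X : Matrix (Idx d) (Idx d) ℂ} (hcomm : X * proj d ψ = proj d ψ * X) :
    X *ᵥ ψ = dotc ψ (X *ᵥ ψ) • ψ := by
  conv_lhs => rw [← hunit.proj_mulVec_self]
  rw [Matrix.mulVec_mulVec, hcomm, ← Matrix.mulVec_mulVec, proj_mulVec]

lemma proj_conjTranspose (ψ : Idx d → ℂ) : (proj d ψ)ᴴ = proj d ψ := by
  ext a b
  simp [proj, mul_comm]

lemma I_smul_proj_mem_stabSet (ψ : Idx d → ℂ) : Complex.I • proj d ψ ∈ stabSet d ψ := by
  refine ⟨?_, by rw [Matrix.smul_mul, Matrix.mul_smul]⟩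
  rw [Matrix.conjTranspose_smul, proj_conjTranspose, Complex.star_def, Complex.conj_I, neg_smul]

lemma IsUnitVec.le_span_of_proj_mulVec_eq_smul (hunit : IsUnitVec d ψ)
    {W : Submodule ℂ (Idx d → ℂ)} (hψ : ψ ∈ W) {c : ℂ}
    (hc : ∀ v ∈ W, proj d ψ *ᵥ v = c • v) : W ≤ Submodule.span ℂ {ψ} := by
  have hc1 : c = 1 := smul_left_injective ℂ hunit.ne_zero <| by
    simpa [hunit.proj_mulVec_self] using (hc ψ hψ).symm
  intro v hv
  rw [← one_smul ℂ v, ← hc1, ← hc v hv, proj_mulVec]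
  exact Submodule.smul_mem _ _ (Submodule.mem_span_singleton_self ψ)

end Projector

section Bipartition

variable {N : ℕ} (d : Fin N → ℕ) (S : Finset (Fin N))

def resS (a : Idx d) : SIdx d S := fun i => a i

def resC (a : Idx d) : SIdx d Sᶜ := fun i => a i

@[simp]
lemma resS_merge (u : SIdx d S) (w : SIdx d Sᶜ) : resS d S (merge d S u w) = u := by
  funext i
  simp [resS, merge]

@[simp]
lemma resC_merge (u : SIdx d S) (w : SIdx d Sᶜ) : resC d S (merge d S u w) = w := by
  funext i
  simp [resC, merge, Finset.mem_compl.mp i.2]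

@[simp]
lemma merge_resS_resC (a : Idx d) : merge d S (resS d S a) (resC d S a) = a := by
  funext i
  by_cases h : i ∈ S <;> simp [merge, resS, resC, h]

def mergeEquiv : SIdx d S × SIdx d Sᶜ ≃ Idx d where
  toFun p := merge d S p.1 p.2
  invFun a := (resS d S a, resC d S a)
  left_inv p := by simp
  right_inv a := merge_resS_resC d S a

def reshape (ψ : Idx d → ℂ) : Matrix (SIdx d S) (SIdx d Sᶜ) ℂ :=
  Matrix.of fun u w => ψ (merge d S u w)

variable {d S}

lemma ext_of_sliceMap_eq {v v' : Idx d → ℂ} (h : ∀ w, sliceMap d S w v = sliceMap d S w v') :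
    v = v' := by
  funext a
  rw [← merge_resS_resC d S a]
  exact congrFun (h (resC d S a)) (resS d S a)

lemma sliceMap_mulVec_of_actsOn {X : Matrix (Idx d) (Idx d) ℂ}
    {Y : Matrix (SIdx d S) (SIdx d S) ℂ}
    (hY : ∀ u u' w w', X (merge d S u w) (merge d S u' w') = if w = w' then Y u u' else 0)
    (w : SIdx d Sᶜ) (v : Idx d → ℂ) :
    sliceMap d S w (X *ᵥ v) = Y *ᵥ sliceMap d S w v := by
  funext u
  simp only [sliceMap, LinearMap.coe_mk, AddHom.coe_mk, Matrix.mulVec, dotProduct]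
  rw [← (mergeEquiv d S).sum_comp, Fintype.sum_prod_type]
  simp [mergeEquiv, hY]

/-- `Tr_{Sᶜ}|ψ⟩⟨ψ| = A Aᴴ` for the reshaped matrix `A` of `ψ`, and `A Aᴴ` has the range of `A`. -/
lemma schmidtSpan_eq_span_sliceMap (ψ : Idx d → ℂ) :
    schmidtSpan d S ψ = Submodule.span ℂ (Set.range fun w => sliceMap d S w ψ) := by
  have hρ : ptrace d S (proj d ψ) = reshape d S ψ * (reshape d S ψ)ᴴ := by
    ext u v
    rw [Matrix.mul_apply]
    rfl
  have hle : schmidtSpan d S ψ ≤ LinearMap.range (reshape d S ψ).mulVecLin := by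
    rw [schmidtSpan, hρ, Matrix.mulVecLin_mul]
    exact LinearMap.range_comp_le_range _ _
  rw [Submodule.eq_of_le_of_finrank_eq hle
    (by rw [schmidtSpan, hρ]; exact Matrix.rank_self_mul_conjTranspose _),
    Matrix.range_mulVecLin]
  rfl

lemma mem_extSchmidtSpan_self (ψ : Idx d → ℂ) : ψ ∈ extSchmidtSpan d S ψ :=
  Submodule.mem_iInf _ |>.mpr fun w => by
    rw [Submodule.mem_comap, schmidtSpan_eq_span_sliceMap]
    exact Submodule.subset_span ⟨w, rfl⟩

lemma exists_mulVec_eq_smul_on_extSchmidtSpan {ψ : Idx d → ℂ} (hunit : IsUnitVec d ψ)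
    {X : Matrix (Idx d) (Idx d) ℂ} (hcomm : X * proj d ψ = proj d ψ * X) (hX : ActsOn d S X) :
    ∃ c : ℂ, ∀ v ∈ extSchmidtSpan d S ψ, X *ᵥ v = c • v := by
  obtain ⟨Y, hY⟩ := hX
  set c := dotc ψ (X *ᵥ ψ)
  have hYψ : Submodule.span ℂ (Set.range fun w => sliceMap d S w ψ) ≤
      Module.End.eigenspace (Matrix.toLin' Y) c := by
    rw [Submodule.span_le]
    rintro _ ⟨w, rfl⟩
    rw [SetLike.mem_coe, Module.End.mem_eigenspace_iff, Matrix.toLin'_apply,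
      ← sliceMap_mulVec_of_actsOn hY, hunit.mulVec_self_eq_smul_of_commute hcomm, map_smul]
  refine ⟨c, fun v hv => ext_of_sliceMap_eq (S := S) fun w => ?_⟩
  have hvw := hYψ <| (schmidtSpan_eq_span_sliceMap ψ).le <| Submodule.mem_iInf _ |>.mp hv w
  rw [Module.End.mem_eigenspace_iff, Matrix.toLin'_apply] at hvw
  rw [sliceMap_mulVec_of_actsOn hY, hvw, map_smul]

end Bipartition

/-- Proposition 5: the unitary generation property implies the
quasi-local stabilizability condition `span(ψ) = ⋂ₖ Σ̄_{𝒩ₖ}(ψ)`. -/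
theorem qls_of_unitary_generation {N K : ℕ} (d : Fin N → ℕ)
    (𝒩 : Fin K → Finset (Fin N)) (ψ : Idx d → ℂ) (hunit : IsUnitVec d ψ)
    (hgen : UnitaryGenProp d 𝒩 ψ) :
    Submodule.span ℂ {ψ} = ⨅ k, extSchmidtSpan d (𝒩 k) ψ := by
  set W := ⨅ k, extSchmidtSpan d (𝒩 k) ψ
  have hψW : ψ ∈ W := Submodule.mem_iInf _ |>.mpr fun k => mem_extSchmidtSpan_self ψ
  have hspan_le : LieSubalgebra.lieSpan ℝ _ (⋃ k, nstabSet d (𝒩 k) ψ) ≤ scalarOn W := by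
    rw [LieSubalgebra.lieSpan_le, Set.iUnion_subset_iff]
    rintro k X ⟨⟨-, hcomm⟩, hX⟩
    obtain ⟨c, hc⟩ := exists_mulVec_eq_smul_on_extSchmidtSpan hunit hcomm hX
    exact ⟨c, fun v hv => hc v (Submodule.mem_iInf _ |>.mp hv k)⟩
  have hmem : Complex.I • proj d ψ ∈ LieSubalgebra.lieSpan ℝ _ (⋃ k, nstabSet d (𝒩 k) ψ) := by
    rw [← SetLike.mem_coe, hgen]
    exact I_smul_proj_mem_stabSet ψ
  obtain ⟨c, hc⟩ := hspan_le hmem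
  refine le_antisymm ((Submodule.span_singleton_le_iff_mem _ _).mpr hψW) ?_
  refine hunit.le_span_of_proj_mulVec_eq_smul hψW (c := -Complex.I * c) fun v hv => ?_
  rw [mul_smul, ← hc v hv, Matrix.smul_mulVec, smul_smul, neg_mul, Complex.I_mul_I, neg_neg,
    one_smul]

end QLS
end

section
/- Let ψ ∈ H be a unit vector that is RFTS with respect to a neighborhood structure 𝒩. For A ⊆ {1,…,N}, define the neighborhood expansion A^𝒩 = ⋃{𝒩_k ∈ 𝒩 : 𝒩_k ∩ A ≠ ∅}. If A, B ⊆ {1,…,N} satisfy A^𝒩 ∩ B^𝒩 = ∅, then for every matrix X on H acting only on A and every matrix Y on H acting only on B: Tr(X Y |ψ⟩⟨ψ|) = Tr(X |ψ⟩⟨ψ|) · Tr(Y |ψ⟩⟨ψ|). -/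
/-!
Compose the stabilizing maps in an arbitrary order into `Φ`. Since `Φ` sends every density
matrix to `P = |ψ⟩⟨ψ|` and density matrices span all matrices (via polarization of outer
products), `Φ M = tr M • P` for every `M`; in particular `Φ (Y P) = tr (Y P) • P`.
Order the maps so that those whose neighborhood misses `B` come first: their Kraus operators
commute with `Y`, so they fix `Y P`. Every later map touches `B`, so its neighborhood misses
`A` (the expansions are disjoint); its Kraus operators commute with `X`, and trace
preservation makes it leave `ρ ↦ tr (X ρ)` invariant. Hence
`tr (X Y P) = tr (X Φ (Y P)) = tr (Y P) tr (X P)`.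
-/

open scoped BigOperators Matrix ComplexOrder

namespace QLS

variable {N : ℕ}

attribute [local instance 100] LieRing.ofAssociativeRing

open Matrix

lemma map_vecMulVec_eq_zero {n : Type*} {V : Type*} [AddCommGroup V] [Module ℂ V]
    (L : Matrix n n ℂ →ₗ[ℂ] V) (hL : ∀ v, L (vecMulVec v (star v)) = 0) (u w : n → ℂ) :
    L (vecMulVec u (star w)) = 0 := by
  have hsum := hL (u + w)
  have hsumI := hL (u + Complex.I • w)
  simp only [star_add, star_smul, vecMulVec_add, add_vecMulVec, smul_vecMulVec, vecMulVec_smul,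
    map_add, map_smul, hL u, hL w, Complex.star_def, Complex.conj_I, zero_add, add_zero,
    smul_zero] at hsum hsumI
  have h2I : (2 * Complex.I) • L (vecMulVec u (star w)) = 0 := by
    linear_combination (norm := module) Complex.I • hsum - hsumI
  exact (smul_eq_zero.mp h2I).resolve_left (by simp)

section ConstantOnDensities

variable {n : Type*} [Fintype n] {V : Type*} [AddCommGroup V] [Module ℂ V]
  {Φ : Matrix n n ℂ →ₗ[ℂ] V} {P : V}

lemma map_eq_trace_smul_of_posSemidef
    (hΦ : ∀ σ : Matrix n n ℂ, σ.PosSemidef → σ.trace = 1 → Φ σ = P)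
    {M : Matrix n n ℂ} (hM : M.PosSemidef) : Φ M = M.trace • P := by
  by_cases htr : M.trace = 0
  · rw [hM.trace_eq_zero_iff.mp htr]
    simp
  · have hσ : (M.trace⁻¹ • M).PosSemidef := hM.smul (inv_nonneg.mpr hM.trace_nonneg)
    have hσtr : (M.trace⁻¹ • M).trace = 1 := by
      rw [trace_smul, smul_eq_mul, inv_mul_cancel₀ htr]
    calc Φ M = M.trace • Φ (M.trace⁻¹ • M) := by rw [map_smul, smul_inv_smul₀ htr]
      _ = M.trace • P := by rw [hΦ _ hσ hσtr]

lemma map_vecMulVec_eq_trace_smul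
    (hΦ : ∀ σ : Matrix n n ℂ, σ.PosSemidef → σ.trace = 1 → Φ σ = P) (u w : n → ℂ) :
    Φ (vecMulVec u (star w)) = (vecMulVec u (star w)).trace • P := by
  refine sub_eq_zero.mp (map_vecMulVec_eq_zero (Φ - (traceLinearMap n ℂ ℂ).smulRight P)
    (fun v => sub_eq_zero.mpr ?_) u w)
  exact map_eq_trace_smul_of_posSemidef hΦ (posSemidef_vecMulVec_self_star v)

end ConstantOnDensities

section Locality

variable {d : Fin N → ℕ}

open Classical in
noncomputable def tensorOne (S : Finset (Fin N)) (Y : Matrix (SIdx d S) (SIdx d S) ℂ) :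
    Matrix (Idx d) (Idx d) ℂ :=
  fun a c => if ∀ i ∉ S, a i = c i then Y (S.restrict a) (S.restrict c) else 0

lemma merge_restrict (S : Finset (Fin N)) (a : Idx d) :
    merge d S (S.restrict a) (Sᶜ.restrict a) = a := by
  funext i
  unfold merge
  split <;> rfl

lemma ActsOn.exists_eq_tensorOne {S : Finset (Fin N)} {X : Matrix (Idx d) (Idx d) ℂ}
    (hX : ActsOn d S X) : ∃ Y, X = tensorOne S Y := by
  obtain ⟨Y, hY⟩ := hX
  refine ⟨Y, funext fun a => funext fun c => ?_⟩
  have h := hY (S.restrict a) (S.restrict c) (Sᶜ.restrict a) (Sᶜ.restrict c)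
  rw [merge_restrict, merge_restrict] at h
  rw [h, tensorOne]
  refine if_congr ⟨fun h i hi => congrFun h ⟨i, Finset.mem_compl.mpr hi⟩, fun h => ?_⟩ rfl rfl
  exact funext fun i => h i (Finset.mem_compl.mp i.2)

lemma tensorOne_mul_tensorOne_apply {S T : Finset (Fin N)} (hST : Disjoint S T)
    (Y : Matrix (SIdx d S) (SIdx d S) ℂ) (Z : Matrix (SIdx d T) (SIdx d T) ℂ) (a b : Idx d) :
    (tensorOne S Y * tensorOne T Z) a b = if ∀ i ∉ S ∪ T, a i = b i then
      Y (S.restrict a) (S.restrict b) * Z (T.restrict a) (T.restrict b) else 0 := by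
  set c₀ := T.piecewise a b
  have hc₀S : S.restrict c₀ = S.restrict b :=
    funext fun i => T.piecewise_eq_of_notMem _ _ (Finset.disjoint_left.mp hST i.2)
  have hc₀a : ∀ i ∈ T, c₀ i = a i := fun i hi => T.piecewise_eq_of_mem _ _ hi
  have hc₀b : ∀ i ∉ T, c₀ i = b i := fun i hi => T.piecewise_eq_of_notMem _ _ hi
  have hc₀T : T.restrict c₀ = T.restrict a := funext fun i => hc₀a i i.2
  have hac₀ : (∀ i ∉ S, a i = c₀ i) ↔ ∀ i ∉ S ∪ T, a i = b i := by
    refine ⟨fun h i hi => ?_, fun h i hiS => ?_⟩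
    · rw [Finset.mem_union, not_or] at hi
      rw [h i hi.1, hc₀b i hi.2]
    · by_cases hiT : i ∈ T
      · exact (hc₀a i hiT).symm
      · rw [hc₀b i hiT]
        exact h i (by simp [hiS, hiT])
  rw [Matrix.mul_apply, Fintype.sum_eq_single c₀]
  · simp only [tensorOne, hc₀S, hc₀T, hac₀, if_pos hc₀b]
    split_ifs <;> simp
  · intro c hc
    simp only [tensorOne]
    split_ifs with hac hcb
    · refine absurd (funext fun i => ?_) hc
      by_cases hiT : i ∈ T
      · rw [hc₀a i hiT, hac i (Finset.disjoint_right.mp hST hiT)]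
      · rw [hc₀b i hiT, hcb i hiT]
    all_goals simp

lemma tensorOne_commute {S T : Finset (Fin N)} (hST : Disjoint S T)
    (Y : Matrix (SIdx d S) (SIdx d S) ℂ) (Z : Matrix (SIdx d T) (SIdx d T) ℂ) :
    Commute (tensorOne S Y) (tensorOne T Z) := by
  ext a b
  rw [tensorOne_mul_tensorOne_apply hST, tensorOne_mul_tensorOne_apply hST.symm,
    Finset.union_comm, mul_comm]

lemma ActsOn.commute {S T : Finset (Fin N)} {X Z : Matrix (Idx d) (Idx d) ℂ} (hX : ActsOn d S X)
    (hZ : ActsOn d T Z) (hST : Disjoint S T) : Commute X Z := by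
  obtain ⟨X', rfl⟩ := hX.exists_eq_tensorOne
  obtain ⟨Z', rfl⟩ := hZ.exists_eq_tensorOne
  exact tensorOne_commute hST X' Z'

end Locality

section Kraus

variable {n ι : Type*} [Fintype n] [Fintype ι] (K : ι → Matrix n n ℂ)

lemma sum_kraus_mul_left {Y : Matrix n n ℂ} (hY : ∀ i, Commute Y (K i)) (ρ : Matrix n n ℂ) :
    ∑ i, K i * (Y * ρ) * (K i)ᴴ = Y * ∑ i, K i * ρ * (K i)ᴴ := by
  simp only [Finset.mul_sum, ← mul_assoc, (hY _).eq]

lemma trace_mul_sum_kraus [DecidableEq n] (hK : ∑ i, (K i)ᴴ * K i = 1) {X : Matrix n n ℂ}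
    (hX : ∀ i, Commute X (K i)) (ρ : Matrix n n ℂ) :
    (X * ∑ i, K i * ρ * (K i)ᴴ).trace = (X * ρ).trace := by
  have hcyc : ∀ i, (X * (K i * ρ * (K i)ᴴ)).trace = (X * ρ * ((K i)ᴴ * K i)).trace := fun i =>
    calc (X * (K i * ρ * (K i)ᴴ)).trace = (K i * (X * ρ * (K i)ᴴ)).trace := by
          rw [← mul_assoc, ← mul_assoc, (hX i).eq]
          simp only [mul_assoc]
      _ = (X * ρ * (K i)ᴴ * K i).trace := trace_mul_comm _ _
      _ = (X * ρ * ((K i)ᴴ * K i)).trace := by rw [mul_assoc]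
  rw [Finset.mul_sum, trace_sum, Finset.sum_congr rfl fun i _ => hcyc i, ← trace_sum,
    ← Finset.mul_sum, hK, mul_one]

end Kraus

section NeighborhoodMap

variable {d : Fin N → ℕ} {S : Finset (Fin N)} {E : Sop d}

lemma IsNeighborhoodMap.map_mul_left {B : Finset (Fin N)} {Y : Matrix (Idx d) (Idx d) ℂ}
    (hE : IsNeighborhoodMap d S E) (hY : ActsOn d B Y) (hSB : Disjoint S B)
    (ρ : Matrix (Idx d) (Idx d) ℂ) : E (Y * ρ) = Y * E ρ := by
  obtain ⟨m, K, hK, hEK, -⟩ := hE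
  rw [hEK, hEK, sum_kraus_mul_left K (fun i => hY.commute (hK i) hSB.symm)]

lemma IsNeighborhoodMap.trace_mul_map {A : Finset (Fin N)} {X : Matrix (Idx d) (Idx d) ℂ}
    (hE : IsNeighborhoodMap d S E) (hX : ActsOn d A X) (hSA : Disjoint S A)
    (ρ : Matrix (Idx d) (Idx d) ℂ) : (X * E ρ).trace = (X * ρ).trace := by
  obtain ⟨m, K, hK, hEK, hunital⟩ := hE
  rw [hEK, trace_mul_sum_kraus K hunital (fun i => hX.commute (hK i) hSA.symm)]

end NeighborhoodMap

section SeqComp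

variable {V : Type*} [AddCommMonoid V] [Module ℂ V]

lemma seqComp_add (a : ℕ) : ∀ (b : ℕ) (F : Fin (a + b) → (V →ₗ[ℂ] V)),
    seqComp F = (seqComp fun j : Fin b => F (Fin.natAdd a j)) ∘ₗ
      seqComp fun i : Fin a => F (Fin.castAdd b i)
  | 0, _ => (LinearMap.id_comp _).symm
  | b + 1, F => congrArg (F (Fin.last (a + b)) ∘ₗ ·) (seqComp_add a b fun t => F t.castSucc)

lemma seqComp_apply_eq_self : ∀ {T : ℕ} {E : Fin T → (V →ₗ[ℂ] V)} {x : V},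
    (∀ t, E t x = x) → seqComp E x = x
  | 0, _, _, _ => rfl
  | _ + 1, E, x, h => by
    change E _ (seqComp _ x) = x
    rw [seqComp_apply_eq_self fun t => h _, h]

lemma apply_seqComp_eq {W : Type*} {f : V → W} : ∀ {T : ℕ} {E : Fin T → (V →ₗ[ℂ] V)},
    (∀ t ρ, f (E t ρ) = f ρ) → ∀ ρ, f (seqComp E ρ) = f ρ
  | 0, _, _, _ => rfl
  | _ + 1, E, h, ρ => by
    change f (E _ (seqComp _ ρ)) = f ρ
    rw [h, apply_seqComp_eq (fun t => h _) ρ]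

end SeqComp

lemma exists_fin_add_equiv_partition {T : ℕ} (p : Fin T → Prop) [DecidablePred p] :
    ∃ (a b : ℕ) (_ : a + b = T) (π : Fin (a + b) ≃ Fin T),
      (∀ i : Fin a, ¬ p (π (Fin.castAdd b i))) ∧ ∀ j : Fin b, p (π (Fin.natAdd a j)) := by
  have hcard : Fintype.card {t // ¬ p t} + Fintype.card {t // p t} = T := by
    have h := Fintype.card_congr (Equiv.sumCompl p)
    rw [Fintype.card_sum, Fintype.card_fin] at h
    omega
  refine ⟨_, _, hcard, finSumFinEquiv.symm.trans ((Equiv.sumCongr (Fintype.equivFin _).symm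
    (Fintype.equivFin _).symm).trans ((Equiv.sumComm _ _).trans (Equiv.sumCompl p))), ?_, ?_⟩
  · intro i
    simpa using ((Fintype.equivFin {t // ¬ p t}).symm i).2
  · intro j
    simpa using ((Fintype.equivFin {t // p t}).symm j).2

lemma subset_expand {K : ℕ} {𝒩 : Fin K → Finset (Fin N)} {A : Finset (Fin N)} {k : Fin K}
    (hk : (𝒩 k ∩ A).Nonempty) : 𝒩 k ⊆ expand 𝒩 A := by
  intro i hi
  rw [expand, Finset.mem_biUnion]
  exact ⟨k, Finset.mem_univ _, by rwa [if_pos hk]⟩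

lemma disjoint_of_disjoint_expand {K : ℕ} {𝒩 : Fin K → Finset (Fin N)} {A B : Finset (Fin N)}
    (hAB : Disjoint (expand 𝒩 A) (expand 𝒩 B)) {k : Fin K} (hk : (𝒩 k ∩ B).Nonempty) :
    Disjoint (𝒩 k) A := by
  rw [Finset.disjoint_left]
  intro i hiN hiA
  exact Finset.disjoint_left.mp hAB (subset_expand ⟨i, Finset.mem_inter.mpr ⟨hiN, hiA⟩⟩ hiN)
    (subset_expand hk hiN)

lemma mul_proj (d : Fin N → ℕ) (Y : Matrix (Idx d) (Idx d) ℂ) (ψ : Idx d → ℂ) :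
    Y * proj d ψ = vecMulVec (Y *ᵥ ψ) (star ψ) :=
  mul_vecMulVec Y ψ (star ψ)

theorem rfts_finite_correlation_general {N K : ℕ} (d : Fin N → ℕ)
    (𝒩 : Fin K → Finset (Fin N)) (ψ : Idx d → ℂ)
    (hRFTS : RFTS d 𝒩 ψ)
    (A B : Finset (Fin N)) (hdisj : expand 𝒩 A ∩ expand 𝒩 B = ∅) :
    ∀ X Y : Matrix (Idx d) (Idx d) ℂ, ActsOn d A X → ActsOn d B Y →
      (X * Y * proj d ψ).trace = (X * proj d ψ).trace * (Y * proj d ψ).trace := by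
  intro X Y hX hY
  obtain ⟨T, E, hnbr, hfix, hperm⟩ := hRFTS
  choose k hk using hnbr
  obtain ⟨a, b, rfl, π, hfar, hnear⟩ :=
    exists_fin_add_equiv_partition fun t => (𝒩 (k t) ∩ B).Nonempty
  set P := proj d ψ
  have hfirst : seqComp (fun i : Fin a => E (π (Fin.castAdd b i))) (Y * P) = Y * P :=
    seqComp_apply_eq_self fun i => by
      rw [(hk _).map_mul_left hY (Finset.disjoint_iff_inter_eq_empty.mpr
        (Finset.not_nonempty_iff_eq_empty.mp (hfar i))), hfix]
  have hlast := apply_seqComp_eq (f := fun ρ => (X * ρ).trace)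
    (E := fun j : Fin b => E (π (Fin.natAdd a j))) fun j => (hk _).trace_mul_map hX
      (disjoint_of_disjoint_expand (Finset.disjoint_iff_inter_eq_empty.mpr hdisj) (hnear j))
  have hstab : seqComp (fun t => E (π t)) (Y * P) = (Y * P).trace • P := by
    rw [mul_proj]
    exact map_vecMulVec_eq_trace_smul (fun σ h1 h2 => hperm π σ ⟨h1, h2⟩) _ _
  calc (X * Y * P).trace = (X * seqComp (fun t => E (π t)) (Y * P)).trace := by
        rw [seqComp_add, LinearMap.comp_apply, hfirst, hlast, mul_assoc]
    _ = (X * P).trace * (Y * P).trace := by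
        rw [hstab, Matrix.mul_smul, trace_smul, smul_eq_mul, mul_comm]

/-- Theorem 7(i), finite correlation: if `ψ` is RFTS with respect to `𝒩`
and `A`, `B` have disjoint neighborhood expansions, then observables acting only on `A`
and only on `B` are uncorrelated in the state `|ψ⟩⟨ψ|`. -/
theorem rfts_finite_correlation {N K : ℕ} (d : Fin N → ℕ)
    (𝒩 : Fin K → Finset (Fin N)) (ψ : Idx d → ℂ) (hunit : IsUnitVec d ψ)
    (hRFTS : RFTS d 𝒩 ψ)
    (A B : Finset (Fin N)) (hdisj : expand 𝒩 A ∩ expand 𝒩 B = ∅) :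
    ∀ X Y : Matrix (Idx d) (Idx d) ℂ, ActsOn d A X → ActsOn d B Y →
      (X * Y * proj d ψ).trace = (X * proj d ψ).trace * (Y * proj d ψ).trace :=
  rfts_finite_correlation_general d 𝒩 ψ hRFTS A B hdisj

end QLS
end
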